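/- arXiv:0904.1786 — 4 statements merged into one kernel-verified Lean document; each statement's English description precedes it below -/
import Mathlib

section
/- For any elements x, y of a Coxeter group W, the set {uv : u ≤ x, v ≤ y} (where ≤ is the Bruhat order) contains a unique maximal element. -/
/-- The Bruhat order on a Coxeter group, via the subword property: `x ≤ y` iff some
reduced word for `y` has a subword whose product is `x`. -/
def CoxeterSystem.bruhatLE {B W : Type*} [Group W] {M : CoxeterMatrix B}
    (cs : CoxeterSystem M W) (x y : W) : Prop :=
  ∃ ω ω' : List B, cs.IsReduced ω ∧ cs.wordProd ω = y ∧
    List.Sublist ω' ω ∧ cs.wordProd ω' = x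

/-- The set of products `u * v` with `u ≤ x` and `v ≤ y` in the Bruhat order. -/
def CoxeterSystem.prodSet {B W : Type*} [Group W] {M : CoxeterMatrix B}
    (cs : CoxeterSystem M W) (x y : W) : Set W :=
  {w | ∃ u v : W, cs.bruhatLE u x ∧ cs.bruhatLE v y ∧ w = u * v}

/-!
A greatest element of `{u * v : u ≤ x, v ≤ y}` is its unique maximal element, the Bruhat order
being antisymmetric. It is constructed along a reduced word for `y`: when `y < y s`, the set for
`(x, y s)` is `P ∪ P s` with `P` the set for `(x, y)`, and if `m` is greatest in `P` then the
larger of `m` and `m s` is greatest in `P ∪ P s`. Both facts are forms of the lifting property.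
We use the Bruhat order defined by chains `w t < w` (`t` a reflection), in which the lifting
property follows from the strong exchange condition, and identify it with the subword definition.
Strong exchange comes from the action of `W` on `W × {±1}` by signed conjugation: the sign
that `π ω` attaches to `t` is the parity of the occurrences of `t` in the right inversion
sequence of `ω`.
-/

namespace CoxeterSystem

variable {B W : Type*} [Group W] {M : CoxeterMatrix B} (cs : CoxeterSystem M W)

local prefix:100 "s" => cs.simple
local prefix:100 "π" => cs.wordProd
local prefix:100 "ℓ" => cs.length
local prefix:100 "ris " => cs.rightInvSeq

open scoped List

section SignedConjugation

open scoped Classical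

/-- The permutation representation behind the exchange condition (Björner–Brenti, Ch. 1), with `t`
ranging over all of `W` rather than over the reflections. -/
noncomputable def signedConjPerm (i : B) : Equiv.Perm (W × ℤˣ) :=
  Function.Involutive.toPerm (fun p => (s i * p.1 * s i, if p.1 = s i then -p.2 else p.2)) <| by
    rintro ⟨t, e⟩
    have hconj : s i * t * s i = s i ↔ t = s i := by
      constructor <;> rintro h
      · simpa [mul_assoc, cs.simple_mul_simple_self] using congrArg (s i * · * s i) h
      · simp [h, cs.simple_mul_simple_self]
    by_cases ht : t = s i <;> simp [ht, hconj, cs.simple_mul_simple_self, ← mul_assoc]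

@[simp]
theorem signedConjPerm_apply (i : B) (t : W) (e : ℤˣ) :
    cs.signedConjPerm i (t, e) = (s i * t * s i, if t = s i then -e else e) := rfl

theorem signedConjPerm_mul_pow_apply (i j : B) (k : ℕ) (t : W) (e : ℤˣ) :
    ((cs.signedConjPerm i * cs.signedConjPerm j) ^ k) (t, e) =
      ((s i * s j) ^ k * t * ((s i * s j) ^ k)⁻¹,
        e * ∏ l ∈ Finset.range (2 * k), if t = s j * (s i * s j) ^ l then -1 else 1) := by
  set r := s i * s j
  induction k generalizing t e with
  | zero => simp
  | succ k ih =>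
    have hconj (l : ℕ) : r * t * r⁻¹ = s j * r ^ l ↔ t = s j * r ^ (l + 2) := by
      have hr : r⁻¹ * s j = s j * r := by simp [r, mul_assoc, cs.inv_simple]
      have : r⁻¹ * s j * r ^ l * r = s j * r ^ (l + 2) := by
        rw [hr]
        simp only [mul_assoc, ← pow_succ, ← pow_succ']
      rw [← this]
      constructor
      · intro h; rw [mul_assoc r⁻¹, ← h]; group
      · rintro rfl; group
    have hstep : (cs.signedConjPerm i * cs.signedConjPerm j) (t, e) =
        (r * t * r⁻¹, e * ((if t = s j * r ^ 0 then -1 else 1) *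
          if t = s j * r ^ 1 then -1 else 1)) := by
      have hji : s j * t * s j = s i ↔ t = s j * r ^ 1 := by
        rw [pow_one]
        constructor
        · intro h
          rw [show r = s i * s j from rfl, ← h]
          simp [mul_assoc, cs.simple_mul_simple_self]
        · rintro rfl; simp [r, mul_assoc, cs.simple_mul_simple_cancel_left]
      refine Prod.ext ?_ ?_
      · simp [r, mul_assoc, cs.inv_simple]
      · simp only [Equiv.Perm.mul_apply, signedConjPerm_apply, hji, pow_zero, mul_one]
        split_ifs <;> simp
    rw [pow_succ, Equiv.Perm.mul_apply, hstep, ih, Nat.mul_succ, Finset.prod_range_succ',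
      Finset.prod_range_succ']
    refine Prod.ext (by group) ?_
    simp only [hconj, zero_add]
    ac_rfl

/-- The factors of the sign product at `l` and `l + M i j` coincide, so they cancel in pairs. -/
theorem isLiftable_signedConjPerm : M.IsLiftable cs.signedConjPerm := by
  intro i j
  ext ⟨t, e⟩ : 1
  set m := M i j
  have hr : (s i * s j) ^ m = 1 := cs.simple_mul_simple_pow i j
  have hperiodic : ∀ l, (s i * s j) ^ (m + l) = (s i * s j) ^ l := by simp [pow_add, hr]
  rw [signedConjPerm_mul_pow_apply, two_mul, Finset.prod_range_add]
  simp [hr, hperiodic, Int.units_mul_self]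

noncomputable def signedConjRep : W →* Equiv.Perm (W × ℤˣ) :=
  cs.lift ⟨cs.signedConjPerm, cs.isLiftable_signedConjPerm⟩

theorem signedConjRep_simple (i : B) : cs.signedConjRep (s i) = cs.signedConjPerm i :=
  cs.lift_apply_simple cs.isLiftable_signedConjPerm i

theorem signedConjRep_wordProd_apply (ω : List B) (t : W) (e : ℤˣ) :
    cs.signedConjRep (π ω) (t, e) =
      (π ω * t * (π ω)⁻¹, e * ((ris ω).map fun r => if r = t then -1 else 1).prod) := by
  induction ω with
  | nil => simp
  | cons i ω ih =>
    have hcond : π ω * t * (π ω)⁻¹ = s i ↔ (π ω)⁻¹ * s i * π ω = t := by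
      constructor
      · intro h; rw [← h]; group
      · rintro rfl; group
    rw [wordProd_cons, map_mul, Equiv.Perm.mul_apply, ih, signedConjRep_simple,
      signedConjPerm_apply, hcond]
    refine Prod.ext ?_ ?_
    · simp [mul_assoc, cs.inv_simple]
    · simp only [rightInvSeq, List.map_cons, List.prod_cons]
      split_ifs <;> simp

theorem signedConjRep_apply_fst (w t : W) (e : ℤˣ) :
    (cs.signedConjRep w (t, e)).1 = w * t * w⁻¹ := by
  obtain ⟨ω, rfl⟩ := cs.wordProd_surjective w
  rw [signedConjRep_wordProd_apply]

theorem signedConjRep_apply_neg (w t : W) (e : ℤˣ) :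
    cs.signedConjRep w (t, -e) =
      ((cs.signedConjRep w (t, e)).1, -(cs.signedConjRep w (t, e)).2) := by
  obtain ⟨ω, rfl⟩ := cs.wordProd_surjective w
  simp [signedConjRep_wordProd_apply]

theorem signedConjRep_wordProd_apply_snd_of_notMem {ω : List B} {t : W} (ht : t ∉ ris ω)
    (e : ℤˣ) : (cs.signedConjRep (π ω) (t, e)).2 = e := by
  rw [signedConjRep_wordProd_apply, mul_eq_left]
  refine List.prod_eq_one fun x hx => ?_
  obtain ⟨r, hr, rfl⟩ := List.mem_map.1 hx
  exact if_neg fun h : r = t => ht (h ▸ hr)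

theorem signedConjRep_apply_self {t : W} (ht : cs.IsReflection t) (e : ℤˣ) :
    cs.signedConjRep t (t, e) = (t, -e) := by
  obtain ⟨w, i, rfl⟩ := ht
  set ρ := cs.signedConjRep
  set t := w * s i * w⁻¹
  have hp : ρ w⁻¹ (t, e) = (s i, (ρ w⁻¹ (t, e)).2) :=
    Prod.ext (by rw [signedConjRep_apply_fst]; simp only [t]; group) rfl
  set f := (ρ w⁻¹ (t, e)).2
  have hback : ρ w (s i, f) = (t, e) := by
    rw [← hp, ← Equiv.Perm.mul_apply, ← map_mul, mul_inv_cancel, map_one, Equiv.Perm.one_apply]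
  calc ρ t (t, e) = ρ w (ρ (s i) (ρ w⁻¹ (t, e))) := by simp only [ρ, t, map_mul, map_inv]; rfl
    _ = ρ w (s i, -f) := by
        rw [hp]
        simp [ρ, signedConjRep_simple, cs.simple_mul_simple_self]
    _ = (t, -e) := by rw [signedConjRep_apply_neg, hback]

end SignedConjugation

/-- If `t ∉ ris ω`, the sign of `t` under `π ω` is `1`, while under `π ω = (π ω * t) * t` it is
minus the sign under `π ω * t`; so `t` would lie in the right inversion sequence of a reduced word
for `π ω * t`, making `π ω` shorter than `π ω * t`. -/
theorem mem_rightInvSeq_of_isRightInversion (ω : List B) {t : W}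
    (h : cs.IsRightInversion (π ω) t) : t ∈ ris ω := by
  by_contra hω
  obtain ⟨ω', hω'red, hω'eq⟩ := cs.exists_isReduced (π ω * t)
  have hω' : t ∉ ris ω' := fun ht => by
    have := (cs.isRightInversion_of_mem_rightInvSeq hω'red ht).2
    rw [← hω'eq, mul_assoc, h.1.mul_self, mul_one] at this
    exact absurd h.2 this.not_gt
  have hsplit : cs.signedConjRep (π ω) (t, 1) = cs.signedConjRep (π ω') (t, -1) := by
    rw [← hω'eq, ← cs.signedConjRep_apply_self h.1, ← Equiv.Perm.mul_apply, ← map_mul, mul_assoc,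
      h.1.mul_self, mul_one]
  have := congrArg Prod.snd hsplit
  rw [signedConjRep_apply_neg, cs.signedConjRep_wordProd_apply_snd_of_notMem hω,
    cs.signedConjRep_wordProd_apply_snd_of_notMem hω'] at this
  exact absurd this (by decide : (1 : ℤˣ) ≠ -1)

theorem exists_eraseIdx_of_isRightInversion {ω : List B} {t : W}
    (h : cs.IsRightInversion (π ω) t) : ∃ j < ω.length, π ω * t = π (ω.eraseIdx j) := by
  obtain ⟨j, hj, rfl⟩ := List.mem_iff_getElem.1 (cs.mem_rightInvSeq_of_isRightInversion ω h)
  exact ⟨j, by simpa using hj, by rw [← List.getD_eq_getElem _ 1 hj, wordProd_mul_getD_rightInvSeq]⟩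

def BruhatStep (x y : W) : Prop := ∃ t, cs.IsRightInversion y t ∧ x = y * t

def BruhatChain (u w : W) : Prop := Relation.ReflTransGen cs.BruhatStep u w

variable {cs}

theorem BruhatChain.trans {u v w : W} (huv : cs.BruhatChain u v) (hvw : cs.BruhatChain v w) :
    cs.BruhatChain u w :=
  Relation.ReflTransGen.trans huv hvw

theorem BruhatChain.length_le {u w : W} (h : cs.BruhatChain u w) : ℓ u ≤ ℓ w := by
  induction h with
  | refl => rfl
  | tail _ hstep ih =>
    obtain ⟨t, ht, rfl⟩ := hstep
    exact ih.trans ht.2.le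

theorem BruhatChain.eq_of_length_le {u w : W} (h : cs.BruhatChain u w) (hlen : ℓ w ≤ ℓ u) :
    u = w := by
  rcases Relation.ReflTransGen.cases_tail h with rfl | ⟨x, hux, t, ht, rfl⟩
  · rfl
  · exact absurd ((BruhatChain.length_le hux).trans_lt ht.2) hlen.not_gt

theorem BruhatChain.antisymm {u w : W} (h : cs.BruhatChain u w) (h' : cs.BruhatChain w u) :
    u = w :=
  h.eq_of_length_le h'.length_le

theorem bruhatChain_mul_simple {w : W} {i : B} (hw : cs.IsRightDescent w i) :
    cs.BruhatChain (w * s i) w :=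
  .single ⟨s i, (cs.isRightInversion_simple_iff_isRightDescent w i).2 hw, rfl⟩

theorem bruhatChain_self_mul_simple {w : W} {i : B} (hw : ¬cs.IsRightDescent w i) :
    cs.BruhatChain w (w * s i) := by
  have hws : cs.IsRightDescent (w * s i) i :=
    cs.isRightDescent_iff_not_isRightDescent_mul.2 (by rwa [cs.simple_mul_simple_cancel_right])
  simpa [cs.simple_mul_simple_cancel_right] using bruhatChain_mul_simple hws

theorem not_isRightDescent_of_isReduced_append {ω : List B} {i : B}
    (h : cs.IsReduced (ω ++ [i])) : ¬cs.IsRightDescent (π ω) i := by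
  have := cs.length_wordProd_le ω
  rw [IsRightDescent, ← wordProd_singleton, ← wordProd_append, h, List.length_append,
    List.length_singleton]
  omega

/-- With `t' = s t s` one has `y s = (y t s) t'`. If this lengthens `y t s`, it is a step;
otherwise exchanging `t` in a word for `y` ending in `s` can only delete that last letter. -/
theorem BruhatStep.mul_simple_or {x y : W} (h : cs.BruhatStep x y) (i : B) :
    cs.BruhatChain (x * s i) y ∨ cs.BruhatChain (x * s i) (y * s i) := by
  obtain ⟨t, ht, rfl⟩ := h
  have ht' : cs.IsReflection (s i * t * s i) := by simpa [cs.inv_simple] using ht.1.conj (s i)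
  have hys : y * s i * (s i * t * s i) = y * t * s i := by
    simp [mul_assoc, cs.simple_mul_simple_cancel_left]
  rcases (ht'.length_mul_left_ne (y * s i)).lt_or_gt with hlt | hgt
  · exact .inr (.single ⟨s i * t * s i, ⟨ht', hlt⟩, hys.symm⟩)
  · left
    obtain ⟨ρ, hρ, hρy⟩ := cs.exists_isReduced (y * s i)
    have hρi : π (ρ ++ [i]) = y := by
      rw [wordProd_append, ← hρy, wordProd_singleton, cs.simple_mul_simple_cancel_right]
    obtain ⟨j, hj, hyt⟩ := cs.exists_eraseIdx_of_isRightInversion (hρi ▸ ht)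
    rw [hρi] at hyt
    rcases (Nat.lt_succ_iff.1 (by simpa using hj)).lt_or_eq with hj | rfl
    · rw [List.eraseIdx_append_of_lt_length hj, wordProd_append, wordProd_singleton,
        ← cs.simple_mul_simple_cancel_right (w := y * t) i, mul_left_inj] at hyt
      have := cs.length_wordProd_le (ρ.eraseIdx j)
      rw [List.length_eraseIdx_of_lt hj, ← hyt] at this
      rw [hys, hρy, hρ] at hgt
      omega
    · rw [hyt, List.eraseIdx_append_of_length_le le_rfl, Nat.sub_self, List.eraseIdx_cons_zero,
        List.append_nil, ← hρy, cs.simple_mul_simple_cancel_right]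
      exact .refl

theorem BruhatChain.mul_simple_or {u w : W} (h : cs.BruhatChain u w) (i : B) :
    cs.BruhatChain (u * s i) w ∨ cs.BruhatChain (u * s i) (w * s i) := by
  induction h with
  | refl => exact .inr .refl
  | tail _ hstep ih =>
    rcases ih with ih | ih
    · exact .inl (ih.tail hstep)
    · exact (hstep.mul_simple_or i).imp ih.trans ih.trans

theorem BruhatChain.mul_simple_of_isRightDescent {u w : W} {i : B} (h : cs.BruhatChain u w)
    (hw : cs.IsRightDescent w i) : cs.BruhatChain (u * s i) w :=
  (h.mul_simple_or i).elim id (·.trans (bruhatChain_mul_simple hw))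

theorem BruhatChain.mul_simple_mul_simple {u w : W} {i : B} (h : cs.BruhatChain u w)
    (hw : ¬cs.IsRightDescent w i) : cs.BruhatChain (u * s i) (w * s i) :=
  (h.mul_simple_or i).elim (·.trans (bruhatChain_self_mul_simple hw)) id

theorem bruhatChain_wordProd_of_sublist {a b : List B} (ha : cs.IsReduced a) (hb : b <+ a) :
    cs.BruhatChain (π b) (π a) := by
  induction a using List.reverseRecOn generalizing b with
  | nil => rw [List.sublist_nil.1 hb]; exact .refl
  | append_singleton a i ih =>
    have ha' : cs.IsReduced a := by simpa using ha.take a.length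
    have hdesc := not_isRightDescent_of_isReduced_append ha
    obtain ⟨b, c, rfl, hba, hc⟩ := List.sublist_append_iff.1 hb
    rcases List.sublist_singleton.1 hc with rfl | rfl
    · simpa [wordProd_append] using (ih ha' hba).trans (bruhatChain_self_mul_simple hdesc)
    · simpa [wordProd_append] using (ih ha' hba).mul_simple_mul_simple hdesc

theorem BruhatChain.exists_sublist {u : W} {a : List B} (h : cs.BruhatChain u (π a)) :
    ∃ b, b <+ a ∧ π b = u := by
  induction h using Relation.ReflTransGen.head_induction_on with
  | refl => exact ⟨a, .refl a, rfl⟩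
  | head hstep _ ih =>
    obtain ⟨t, ht, rfl⟩ := hstep
    obtain ⟨b, hba, rfl⟩ := ih
    obtain ⟨j, -, hj⟩ := cs.exists_eraseIdx_of_isRightInversion ht
    exact ⟨b.eraseIdx j, (List.eraseIdx_sublist b j).trans hba, hj.symm⟩

theorem BruhatChain.le_mul_simple {u w : W} {i : B} (h : cs.BruhatChain u w)
    (hu : ¬cs.IsRightDescent u i) : cs.BruhatChain u (w * s i) := by
  obtain ⟨c, hc, hcw⟩ := cs.exists_isReduced (w * s i)
  have hci : π (c ++ [i]) = w := by
    rw [wordProd_append, ← hcw, wordProd_singleton, cs.simple_mul_simple_cancel_right]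
  obtain ⟨b, hb, rfl⟩ := BruhatChain.exists_sublist (hci ▸ h)
  obtain ⟨b, d, rfl, hbc, hd⟩ := List.sublist_append_iff.1 hb
  rw [hcw]
  rcases List.sublist_singleton.1 hd with rfl | rfl
  · simpa using bruhatChain_wordProd_of_sublist hc hbc
  · rw [wordProd_append, wordProd_singleton] at hu ⊢
    have hb : cs.IsRightDescent (π b) i := by
      rwa [cs.isRightDescent_iff_not_isRightDescent_mul]
    exact (bruhatChain_mul_simple hb).trans (bruhatChain_wordProd_of_sublist hc hbc)

theorem bruhatLE_iff_bruhatChain {u w : W} : cs.bruhatLE u w ↔ cs.BruhatChain u w := by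
  constructor
  · rintro ⟨a, b, ha, rfl, hb, rfl⟩
    exact bruhatChain_wordProd_of_sublist ha hb
  · intro h
    obtain ⟨a, ha, rfl⟩ := cs.exists_isReduced w
    obtain ⟨b, hb, rfl⟩ := h.exists_sublist
    exact ⟨a, b, ha, rfl, hb, rfl⟩

theorem mem_prodSet_iff {x y z : W} :
    z ∈ cs.prodSet x y ↔ ∃ u v, cs.BruhatChain u x ∧ cs.BruhatChain v y ∧ z = u * v := by
  simp only [prodSet, Set.mem_ofPred_eq, bruhatLE_iff_bruhatChain]

theorem prodSet_mul_simple {x y : W} {i : B} (hy : ¬cs.IsRightDescent y i) :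
    cs.prodSet x (y * s i) = cs.prodSet x y ∪ (· * s i) '' cs.prodSet x y := by
  ext z
  simp only [Set.mem_union, Set.mem_image, mem_prodSet_iff]
  constructor
  · rintro ⟨u, v, hu, hv, rfl⟩
    by_cases hv' : cs.IsRightDescent v i
    · have hys : cs.IsRightDescent (y * s i) i :=
        cs.isRightDescent_iff_not_isRightDescent_mul.2 (by rwa [cs.simple_mul_simple_cancel_right])
      have hvs : ¬cs.IsRightDescent (v * s i) i :=
        cs.isRightDescent_iff_not_isRightDescent_mul.1 hv'
      have hvy : cs.BruhatChain (v * s i) y := by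
        simpa [cs.simple_mul_simple_cancel_right] using
          (hv.mul_simple_of_isRightDescent hys).le_mul_simple hvs
      exact .inr ⟨u * (v * s i), ⟨u, v * s i, hu, hvy, rfl⟩, by
        simp [mul_assoc, cs.simple_mul_simple_self]⟩
    · have hvy : cs.BruhatChain v y := by
        simpa [cs.simple_mul_simple_cancel_right] using hv.le_mul_simple hv'
      exact .inl ⟨u, v, hu, hvy, rfl⟩
  · rintro (⟨u, v, hu, hv, rfl⟩ | ⟨_, ⟨u, v, hu, hv, rfl⟩, rfl⟩)
    · exact ⟨u, v, hu, hv.trans (bruhatChain_self_mul_simple hy), rfl⟩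
    · exact ⟨u, v * s i, hu, hv.mul_simple_mul_simple hy, mul_assoc _ _ _⟩

variable (cs) in
def IsBruhatGreatest (S : Set W) (m : W) : Prop := m ∈ S ∧ ∀ z ∈ S, cs.BruhatChain z m

theorem IsBruhatGreatest.union_image_mul_simple {S : Set W} {m : W}
    (h : cs.IsBruhatGreatest S m) (i : B) :
    ∃ m', cs.IsBruhatGreatest (S ∪ (· * s i) '' S) m' := by
  by_cases hm : cs.IsRightDescent m i
  · refine ⟨m, .inl h.1, ?_⟩
    rintro z (hz | ⟨z, hz, rfl⟩)
    · exact h.2 z hz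
    · exact (h.2 z hz).mul_simple_of_isRightDescent hm
  · refine ⟨m * s i, .inr ⟨m, h.1, rfl⟩, ?_⟩
    rintro z (hz | ⟨z, hz, rfl⟩)
    · exact (h.2 z hz).trans (bruhatChain_self_mul_simple hm)
    · exact (h.2 z hz).mul_simple_mul_simple hm

variable (cs) in
theorem isBruhatGreatest_prodSet_one (x : W) : cs.IsBruhatGreatest (cs.prodSet x 1) x := by
  refine ⟨mem_prodSet_iff.2 ⟨x, 1, .refl, .refl, (mul_one x).symm⟩, fun z hz => ?_⟩
  obtain ⟨u, v, hu, hv, rfl⟩ := mem_prodSet_iff.1 hz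
  rwa [hv.eq_of_length_le (by simp), mul_one]

variable (cs) in
theorem exists_isBruhatGreatest_prodSet (x y : W) :
    ∃ m, cs.IsBruhatGreatest (cs.prodSet x y) m := by
  obtain ⟨ω, hω, rfl⟩ := cs.exists_isReduced y
  induction ω using List.reverseRecOn with
  | nil => exact ⟨x, cs.isBruhatGreatest_prodSet_one x⟩
  | append_singleton ω i ih =>
    obtain ⟨m, hm⟩ := ih (by simpa using hω.take ω.length)
    rw [wordProd_append, wordProd_singleton,
      prodSet_mul_simple (not_isRightDescent_of_isReduced_append hω)]
    exact hm.union_image_mul_simple i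

end CoxeterSystem

/-- For any `x, y` in a Coxeter group, the set `{u * v : u ≤ x, v ≤ y}` contains a
unique maximal element in the Bruhat order. -/
theorem prodSet_exists_unique_maximal {B W : Type*} [Group W] {M : CoxeterMatrix B} (cs : CoxeterSystem M W) (x y : W) :
    ∃! m : W, m ∈ cs.prodSet x y ∧ ∀ z ∈ cs.prodSet x y, cs.bruhatLE m z → z = m := by
  obtain ⟨m, hm, hmax⟩ := cs.exists_isBruhatGreatest_prodSet x y
  refine ⟨m, ⟨hm, fun z hz hmz => ?_⟩, fun m' ⟨hm', hmax'⟩ => ?_⟩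
  · exact (hmax z hz).antisymm (CoxeterSystem.bruhatLE_iff_bruhatChain.1 hmz)
  · exact (hmax' m hm (CoxeterSystem.bruhatLE_iff_bruhatChain.2 (hmax m' hm'))).symm
end

section
/- For any elements x, y of a Coxeter group W, there exist u' ≤ x and v' ≤ y such that x ∗ y = u'y = xv' with ℓ(x ∗ y) = ℓ(u') + ℓ(y) = ℓ(x) + ℓ(v'), where ∗ is the Demazure product and ℓ the length function. -/
namespace CoxeterSystem

open List

variable {B W : Type*} [Group W] {M : CoxeterMatrix B} (cs : CoxeterSystem M W)

local prefix:100 "s " => cs.simple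
local prefix:100 "π " => cs.wordProd
local prefix:100 "ℓ " => cs.length
local prefix:100 "lis " => cs.leftInvSeq

section ReflectionRepresentation

variable [DecidableEq W]

def reflectionPerm (i : B) : Equiv.Perm (W × ℤˣ) :=
  Function.Involutive.toPerm
    (fun p => (s i * p.1 * s i, (if p.1 = s i then -1 else 1) * p.2))
    (by
      rintro ⟨t, ε⟩
      have hfix : s i * t * s i = s i ↔ t = s i := by
        constructor
        · intro h; simpa [mul_assoc] using congrArg (fun u => s i * u * s i) h
        · rintro rfl; simp
      refine Prod.ext (by simp [mul_assoc]) ?_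
      simp only [hfix]
      by_cases ht : t = s i <;> simp [ht])

theorem reflectionPerm_apply (i : B) (t : W) (ε : ℤˣ) :
    cs.reflectionPerm i (t, ε) = (s i * t * s i, (if t = s i then -1 else 1) * ε) := rfl

theorem reflectionPerm_mul_pow_apply (i j : B) (k : ℕ) (t : W) (ε : ℤˣ) :
    ((cs.reflectionPerm i * cs.reflectionPerm j) ^ k) (t, ε) =
      ((s i * s j) ^ k * t * (s j * s i) ^ k,
        (∏ l ∈ Finset.range (2 * k), if t = (s j * s i) ^ l * s j then -1 else 1) * ε) := by
  induction k generalizing t ε with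
  | zero => simp
  | succ k ih =>
    have conj_eq_iff : ∀ x y u : W, x * t * y = u ↔ t = x⁻¹ * u * y⁻¹ := by
      intro x y u
      constructor <;> rintro rfl <;> group
    have h₀ : t = s j ↔ t = (s j * s i) ^ 0 * s j := by simp
    have h₁ : s j * t * s j = s i ↔ t = (s j * s i) ^ (0 + 1) * s j := by
      rw [conj_eq_iff, inv_simple, zero_add, pow_one]
    have h₂ : ∀ l : ℕ, s i * (s j * t * s j) * s i = (s j * s i) ^ l * s j ↔
        t = (s j * s i) ^ (l + 1 + 1) * s j := by
      intro l
      rw [show s i * (s j * t * s j) * s i = s i * s j * t * (s j * s i) by group, conj_eq_iff,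
        pow_succ, pow_succ']
      simp only [mul_inv_rev, inv_simple, mul_assoc]
    rw [pow_succ, Equiv.Perm.mul_apply, Equiv.Perm.mul_apply, reflectionPerm_apply,
      reflectionPerm_apply, ih, mul_add_one, Finset.prod_range_succ', Finset.prod_range_succ']
    refine Prod.ext ?_ ?_
    · rw [pow_succ (s i * s j), pow_succ' (s j * s i)]
      simp only [mul_assoc]
    · simp only [h₀, h₁, h₂]
      ac_rfl

theorem isLiftable_reflectionPerm : M.IsLiftable cs.reflectionPerm := by
  intro i j
  ext ⟨t, ε⟩ : 1
  -- `(s j * s i) ^ M i j = 1`, so the product over `2 * M i j` factors is a square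
  have hsign : (∏ l ∈ Finset.range (2 * M i j),
      if t = (s j * s i) ^ l * s j then (-1 : ℤˣ) else 1) = 1 := by
    rw [two_mul, Finset.prod_range_add]
    simp only [pow_add, simple_mul_simple_pow', one_mul]
    exact Int.units_mul_self _
  simp [reflectionPerm_mul_pow_apply, hsign]

def reflectionRep : W →* Equiv.Perm (W × ℤˣ) :=
  cs.lift ⟨cs.reflectionPerm, cs.isLiftable_reflectionPerm⟩

theorem reflectionRep_simple (i : B) : cs.reflectionRep (s i) = cs.reflectionPerm i :=
  cs.lift_apply_simple cs.isLiftable_reflectionPerm i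

theorem count_leftInvSeq_cons (i : B) (ω : List B) (t : W) :
    count t (lis (i :: ω)) = count (s i * t * s i) (lis ω) + if t = s i then 1 else 0 := by
  have hconj :=
    count_map_of_injective (lis ω) _ (MulAut.conj (s i)).injective (s i * t * s i)
  simp only [MulAut.conj_apply, inv_simple, mul_assoc, simple_mul_simple_cancel_left,
    simple_mul_simple_self, mul_one] at hconj
  rw [leftInvSeq, count_cons, hconj, ← mul_assoc]
  by_cases h : t = s i
  · subst h; simp
  · simp [h, Ne.symm h]

theorem reflectionRep_wordProd_inv_apply (ω : List B) (t : W) (ε : ℤˣ) :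
    cs.reflectionRep (π ω)⁻¹ (t, ε) = ((π ω)⁻¹ * t * π ω, (-1) ^ count t (lis ω) * ε) := by
  induction ω generalizing t ε with
  | nil => simp
  | cons i ω ih =>
    rw [wordProd_cons, mul_inv_rev, inv_simple, map_mul, Equiv.Perm.mul_apply, reflectionRep_simple,
      reflectionPerm_apply, ih, count_leftInvSeq_cons]
    refine Prod.ext (by simp only [mul_assoc]) ?_
    by_cases h : t = s i <;> simp [h, pow_succ, mul_assoc]

theorem neg_one_pow_count_leftInvSeq_eq {ω ω' : List B} (h : π ω = π ω') (t : W) :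
    (-1 : ℤˣ) ^ count t (lis ω) = (-1) ^ count t (lis ω') := by
  have := congrArg (fun w => (cs.reflectionRep w⁻¹ (t, 1)).2) h
  simpa only [reflectionRep_wordProd_inv_apply, mul_one] using this

end ReflectionRepresentation

theorem simple_mem_leftInvSeq_of_isLeftDescent {ω : List B} {i : B}
    (h : cs.IsLeftDescent (π ω) i) : s i ∈ lis ω := by
  classical
  obtain ⟨ω', hω', hprod⟩ := cs.exists_isReduced (s i * π ω)
  have hnot : s i ∉ lis ω' := fun hmem => by
    have := (cs.isLeftInversion_of_mem_leftInvSeq hω' hmem).2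
    rw [← hprod, simple_mul_simple_cancel_left] at this
    exact lt_asymm h this
  have hodd := cs.neg_one_pow_count_leftInvSeq_eq
    (show π (i :: ω') = π ω by rw [wordProd_cons, ← hprod, simple_mul_simple_cancel_left]) (s i)
  rw [count_leftInvSeq_cons, simple_mul_simple_self, one_mul, if_pos rfl,
    count_eq_zero_of_not_mem hnot, zero_add, pow_one] at hodd
  by_contra hmem
  rw [count_eq_zero_of_not_mem hmem, pow_zero] at hodd
  exact absurd hodd (by decide)

theorem exists_eraseIdx_of_isLeftDescent {ω : List B} {i : B} (h : cs.IsLeftDescent (π ω) i) :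
    ∃ j < ω.length, s i * π ω = π (ω.eraseIdx j) := by
  obtain ⟨j, hj, hget⟩ := List.mem_iff_getElem.mp (cs.simple_mem_leftInvSeq_of_isLeftDescent h)
  rw [length_leftInvSeq] at hj
  refine ⟨j, hj, ?_⟩
  rw [← getD_leftInvSeq_mul_wordProd, getD_eq_getElem _ _ (by simpa using hj), hget]

structure IsDemazureProduct (star : W → W → W) : Prop where
  one_star : ∀ w, star 1 w = w
  simple_star : ∀ (i : B) (w : W), star (s i) w = if ℓ w < ℓ (s i * w) then s i * w else w
  star_assoc : ∀ a b c, star (star a b) c = star a (star b c)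

namespace IsDemazureProduct

variable {cs} {star : W → W → W}

theorem star_wordProd_cons (h : cs.IsDemazureProduct star) {i : B} {ξ : List B}
    (hξ : cs.IsReduced (i :: ξ)) (y : W) :
    star (π (i :: ξ)) y = star (s i) (star (π ξ) y) := by
  have hlt : ℓ (π ξ) < ℓ (s i * π ξ) := by
    have := cs.length_wordProd_le ξ
    rw [← wordProd_cons, hξ.eq, length_cons]
    omega
  rw [← h.star_assoc, h.simple_star, if_pos hlt, wordProd_cons]

theorem exists_sublist_star_eq_wordProd_mul (h : cs.IsDemazureProduct star) {ξ : List B}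
    (hξ : cs.IsReduced ξ) (y : W) :
    ∃ ξ', ξ' <+ ξ ∧ star (π ξ) y = π ξ' * y ∧ ℓ (star (π ξ) y) = ℓ (π ξ') + ℓ y := by
  induction ξ with
  | nil => exact ⟨[], nil_sublist _, by simp [h.one_star]⟩
  | cons i ξ ih =>
    obtain ⟨ξ', hsub, heq, hlen⟩ := ih (by simpa using hξ.drop 1)
    rw [h.star_wordProd_cons hξ, h.simple_star]
    split_ifs with hasc
    · have hmul : s i * star (π ξ) y = π (i :: ξ') * y := by
        rw [heq, wordProd_cons, mul_assoc]
      have hup := (cs.length_simple_mul (star (π ξ) y) i).resolve_right (by omega)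
      have hle := cs.length_mul_le (π (i :: ξ')) y
      have hcons := cs.length_simple_mul (π ξ') i
      rw [← hmul] at hle
      rw [← wordProd_cons] at hcons
      refine ⟨i :: ξ', hsub.cons_cons i, hmul, by omega⟩
    · exact ⟨ξ', hsub.cons i, heq, hlen⟩

theorem exists_sublist_star_eq_wordProd_append (h : cs.IsDemazureProduct star) {ξ Ω : List B}
    (hξ : cs.IsReduced ξ) (hΩ : cs.IsReduced Ω) :
    ∃ ρ, ρ <+ Ω ∧ star (π ξ) (π Ω) = π (ξ ++ ρ) ∧ cs.IsReduced (ξ ++ ρ) := by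
  induction ξ with
  | nil => exact ⟨Ω, Sublist.refl Ω, by simp [h.one_star], hΩ⟩
  | cons i ξ ih =>
    obtain ⟨ρ, hsub, heq, hred⟩ := ih (by simpa using hξ.drop 1)
    rw [h.star_wordProd_cons hξ, h.simple_star, heq]
    split_ifs with hasc
    · refine ⟨ρ, hsub, by rw [cons_append, wordProd_cons], ?_⟩
      have hup := (cs.length_simple_mul (π (ξ ++ ρ)) i).resolve_right (by omega)
      rw [IsReduced, cons_append, wordProd_cons, hup, hred.eq, length_cons]
    · have hdesc : cs.IsLeftDescent (π (ξ ++ ρ)) i := by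
        unfold IsLeftDescent
        have := cs.length_simple_mul_ne (π (ξ ++ ρ)) i
        omega
      obtain ⟨j, hj, hdel⟩ := cs.exists_eraseIdx_of_isLeftDescent hdesc
      have hjξ : ξ.length ≤ j := by
        by_contra! hjξ
        rw [eraseIdx_append_of_lt_length hjξ, wordProd_append, wordProd_append, ← mul_assoc] at hdel
        have hlen := congrArg cs.length (mul_right_cancel hdel)
        rw [← wordProd_cons, hξ.eq] at hlen
        have := cs.length_wordProd_le (ξ.eraseIdx j)
        have := length_eraseIdx_add_one hjξ
        simp only [length_cons] at hlen
        omega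
      rw [eraseIdx_append_of_length_le hjξ] at hdel
      refine ⟨ρ.eraseIdx (j - ξ.length), (eraseIdx_sublist _ _).trans hsub, ?_, ?_⟩
      · rw [cons_append, wordProd_cons, ← hdel, simple_mul_simple_cancel_left]
      · have hρ := length_eraseIdx_add_one (l := ρ) (i := j - ξ.length)
          (by rw [length_append] at hj; omega)
        rw [IsReduced, cons_append, wordProd_cons, ← hdel, simple_mul_simple_cancel_left, hred.eq]
        simp only [length_cons, length_append]
        omega

end IsDemazureProduct

end CoxeterSystem

/-- There exist `u' ≤ x` and `v' ≤ y` with `x ∗ y = u' * y = x * v'` and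
`ℓ(x ∗ y) = ℓ(u') + ℓ(y) = ℓ(x) + ℓ(v')`. -/
theorem demazure_exists_length_additive {B W : Type*} [Group W] {M : CoxeterMatrix B} (cs : CoxeterSystem M W)
    (star : W → W → W)
    (hstar_one : ∀ w : W, star 1 w = w)
    (hstar_simple : ∀ (i : B) (w : W), star (cs.simple i) w =
      if cs.length w < cs.length (cs.simple i * w) then cs.simple i * w else w)
    (hstar_assoc : ∀ a b c : W, star (star a b) c = star a (star b c))
    (x y : W) :
    ∃ u' v' : W, cs.bruhatLE u' x ∧ cs.bruhatLE v' y ∧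
      star x y = u' * y ∧ star x y = x * v' ∧
      cs.length (star x y) = cs.length u' + cs.length y ∧
      cs.length (star x y) = cs.length x + cs.length v' := by
  have h : cs.IsDemazureProduct star := ⟨hstar_one, hstar_simple, hstar_assoc⟩
  obtain ⟨ξ, hξ, rfl⟩ := cs.exists_isReduced x
  obtain ⟨Ω, hΩ, rfl⟩ := cs.exists_isReduced y
  obtain ⟨ξ', hξ', hleft, hlen⟩ := h.exists_sublist_star_eq_wordProd_mul hξ (cs.wordProd Ω)
  obtain ⟨ρ, hρ, hright, hred⟩ := h.exists_sublist_star_eq_wordProd_append hξ hΩ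
  have hρred : cs.IsReduced ρ := by simpa using hred.drop ξ.length
  refine ⟨cs.wordProd ξ', cs.wordProd ρ, ⟨ξ, ξ', hξ, rfl, hξ', rfl⟩, ⟨Ω, ρ, hΩ, rfl, hρ, rfl⟩,
    hleft, ?_, hlen, ?_⟩
  · rw [hright, cs.wordProd_append]
  · rw [hright, hred.eq, hξ.eq, hρred.eq, List.length_append]
end

section
/- Define x ▷ y to be the unique minimal element of {uy : u ≤ x}. Then there exists u' ≤ x with x ▷ y = u'y and ℓ(x ▷ y) = ℓ(y) − ℓ(u'). -/
/-- The set of products `u * y` with `u ≤ x` in the Bruhat order. -/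
def CoxeterSystem.triSet {B W : Type*} [Group W] {M : CoxeterMatrix B}
    (cs : CoxeterSystem M W) (x y : W) : Set W :=
  {w | ∃ u : W, cs.bruhatLE u x ∧ w = u * y}

/-- `m` is the unique minimal element of `S` with respect to the Bruhat order. -/
def CoxeterSystem.IsUniqueBruhatMin {B W : Type*} [Group W] {M : CoxeterMatrix B}
    (cs : CoxeterSystem M W) (S : Set W) (m : W) : Prop :=
  (m ∈ S ∧ ∀ z ∈ S, cs.bruhatLE z m → z = m) ∧
    ∀ z ∈ S, (∀ z' ∈ S, cs.bruhatLE z' z → z' = z) → z = m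

/-!
The key tool is the strong exchange property: if `t` is a reflection with `ℓ (w * t) < ℓ w`,
then `t` occurs in the right inversion sequence of every word for `w`. It comes from the sign
cocycle: `W` acts on `W × ℤˣ` with `s` acting by `(w, ε) ↦ (s w s, ±ε)`, the sign flipping
exactly at `w = s`; the Coxeter relations hold because every element occurs an even number of
times in the right inversion sequence of the braid word `(a b)^(M a b)`.

By strong exchange, if `u` is length-subtractive for `s * y`, i.e.
`ℓ (u * (s * y)) + ℓ u = ℓ (s * y)`, then either `u` is length-subtractive for `y` and `u * y`
is shorter than `u * (s * y)`, or `u * s` is length-subtractive for `y`. Running this along a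
subword `τ` of a reduced word for `x` yields a subword `σ` of `τ` such that `π σ` is
length-subtractive for `y` and `ℓ (π σ * y) ≤ ℓ (π τ * y)`. Starting from `x ▷ y = π τ * y`,
the element `π σ * y` of `{u * y : u ≤ x}` has minimal length; an element of minimal length is
Bruhat-minimal, so it is `x ▷ y`.
-/

open List

namespace CoxeterSystem

variable {B W : Type*} [Group W] {M : CoxeterMatrix B} (cs : CoxeterSystem M W)

local prefix:100 "s" => cs.simple
local prefix:100 "π" => cs.wordProd
local prefix:100 "ℓ" => cs.length
local prefix:100 "ris" => cs.rightInvSeq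
local prefix:100 "lis" => cs.leftInvSeq

open scoped Classical

theorem prod_map_alternatingWord_two_mul {G : Type*} [Monoid G] (f : B → G) (a b : B) (m : ℕ) :
    ((alternatingWord a b (2 * m)).map f).prod = (f a * f b) ^ m := by
  induction m with
  | zero => simp [alternatingWord]
  | succ m ih =>
    rw [show 2 * (m + 1) = 2 * m + 1 + 1 by ring, alternatingWord_succ', alternatingWord_succ',
      if_neg (by simp [parity_simps]), if_pos (by simp), map_cons, map_cons, prod_cons, prod_cons,
      ih, pow_succ', mul_assoc]

theorem conj_simple_eq_simple_iff (i : B) (w : W) : MulAut.conj (s i) w = s i ↔ w = s i := by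
  calc MulAut.conj (s i) w = s i ↔ MulAut.conj (s i) w = MulAut.conj (s i) (s i) := by simp
    _ ↔ w = s i := (MulAut.conj (s i)).apply_eq_iff_eq

theorem conj_simple_conj_simple (i : B) (w : W) : MulAut.conj (s i) (MulAut.conj (s i) w) = w := by
  rw [← MulAut.mul_apply, ← map_mul, simple_mul_simple_self, map_one, MulAut.one_apply]

noncomputable def simpleFlip (i : B) : Equiv.Perm (W × ℤˣ) :=
  Function.Involutive.toPerm (fun p => (MulAut.conj (s i) p.1, if p.1 = s i then -p.2 else p.2))
    (by
      rintro ⟨w, ε⟩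
      refine Prod.ext (conj_simple_conj_simple cs i w) ?_
      by_cases h : w = s i <;>
        simp only [conj_simple_eq_simple_iff, h, if_true, if_false, neg_neg])

theorem prod_map_simpleFlip_apply (ω : List B) (w : W) (ε : ℤˣ) :
    (ω.map cs.simpleFlip).prod (w, ε) =
      (MulAut.conj (π ω) w, ε * (-1) ^ (ris ω).count w) := by
  induction ω generalizing ε with
  | nil => simp
  | cons i ω ih =>
    have hris : ris (i :: ω) = (π ω)⁻¹ * s i * π ω :: ris ω := rfl
    have hhead : π ω * w * (π ω)⁻¹ = s i ↔ (π ω)⁻¹ * s i * π ω = w := by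
      constructor <;> intro h <;> rw [← h] <;> group
    rw [map_cons, prod_cons, Equiv.Perm.mul_apply, ih, hris, count_cons, wordProd_cons, map_mul]
    by_cases h : (π ω)⁻¹ * s i * π ω = w
    · simp [simpleFlip, hhead.mpr h, h, pow_succ]
    · simp [simpleFlip, mt hhead.mp h, h]

theorem rightInvSeq_alternatingWord (a b : B) (n : ℕ) :
    ris (alternatingWord a b n) = ((range n).map fun p => (s b * s a) ^ p * s b).reverse := by
  induction n generalizing a b with
  | zero => simp [alternatingWord]
  | succ n ih =>
    have hsemi : SemiconjBy (s b) (s a * s b) (s b * s a) := by simp [SemiconjBy, mul_assoc]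
    rw [alternatingWord_succ, rightInvSeq_concat, ih, concat_eq_append, range_succ_eq_map,
      map_cons, map_map, reverse_cons, map_reverse, map_map]
    congr 3
    funext p
    simp only [Function.comp_apply, MulAut.conj_apply, inv_simple, pow_succ, ← mul_assoc,
      (hsemi.pow_right p).eq]
    simp

theorem even_count_rightInvSeq_alternatingWord_two_mul (a b : B) (w : W) :
    Even ((ris (alternatingWord a b (2 * M a b))).count w) := by
  have hperiod : ∀ p, (s b * s a) ^ (M a b + p) = (s b * s a) ^ p := by
    intro p
    rw [pow_add, M.symmetric, simple_mul_simple_pow, one_mul]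
  rw [rightInvSeq_alternatingWord, count_reverse, two_mul, range_add, map_append, map_map,
    count_append]
  simp only [Function.comp_def, hperiod]
  exact ⟨_, rfl⟩

theorem isLiftable_simpleFlip : M.IsLiftable cs.simpleFlip := by
  intro a b
  rw [← prod_map_alternatingWord_two_mul]
  ext ⟨w, ε⟩ : 1
  rw [prod_map_simpleFlip_apply, wordProd, prod_map_alternatingWord_two_mul, simple_mul_simple_pow,
    (even_count_rightInvSeq_alternatingWord_two_mul cs a b w).neg_one_pow]
  simp

noncomputable def signRep : W →* Equiv.Perm (W × ℤˣ) :=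
  cs.lift ⟨cs.simpleFlip, cs.isLiftable_simpleFlip⟩

theorem signRep_wordProd (ω : List B) : cs.signRep (π ω) = (ω.map cs.simpleFlip).prod := by
  rw [wordProd, map_list_prod, map_map]
  congr 2
  funext i
  exact cs.lift_apply_simple cs.isLiftable_simpleFlip i

noncomputable def reflSign (w t : W) : ℤˣ := (cs.signRep w (t, 1)).2

theorem reflSign_wordProd (ω : List B) (t : W) :
    cs.reflSign (π ω) t = (-1) ^ (ris ω).count t := by
  simp [reflSign, signRep_wordProd, prod_map_simpleFlip_apply]

theorem signRep_apply (w t : W) (ε : ℤˣ) :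
    cs.signRep w (t, ε) = (MulAut.conj w t, ε * cs.reflSign w t) := by
  obtain ⟨ω, rfl⟩ := cs.wordProd_surjective w
  rw [signRep_wordProd, prod_map_simpleFlip_apply, reflSign_wordProd]

theorem reflSign_mul (w₁ w₂ t : W) :
    cs.reflSign (w₁ * w₂) t = cs.reflSign w₂ t * cs.reflSign w₁ (MulAut.conj w₂ t) := by
  rw [reflSign, map_mul, Equiv.Perm.mul_apply, signRep_apply, signRep_apply, one_mul]

theorem reflSign_one (t : W) : cs.reflSign 1 t = 1 := by
  simp [reflSign]

theorem reflSign_simple_self (i : B) : cs.reflSign (s i) (s i) = -1 := by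
  simpa using cs.reflSign_wordProd [i] (s i)

theorem reflSign_self {t : W} (ht : cs.IsReflection t) : cs.reflSign t t = -1 := by
  obtain ⟨w, i, rfl⟩ := ht
  have hcancel := cs.reflSign_mul w⁻¹ w (s i)
  rw [inv_mul_cancel, reflSign_one, MulAut.conj_apply] at hcancel
  have hconj : MulAut.conj w⁻¹ (w * s i * w⁻¹) = s i := by simp; group
  rw [reflSign_mul, hconj, reflSign_mul, reflSign_simple_self, MulAut.conj_apply,
    mul_inv_cancel_right, mul_left_comm, mul_comm _ (cs.reflSign w (s i)), ← hcancel, mul_one]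

theorem length_wordProd_mul_lt_of_mem_rightInvSeq {ω : List B} {t : W} (ht : t ∈ ris ω) :
    ℓ (π ω * t) < ω.length := by
  obtain ⟨j, hj, rfl⟩ := List.getElem_of_mem ht
  rw [← getD_eq_getElem _ 1, wordProd_mul_getD_rightInvSeq]
  refine (cs.length_wordProd_le _).trans_lt ?_
  rw [length_eraseIdx_of_lt (by simpa using hj)]
  simp at hj
  omega

theorem length_mul_lt_of_reflSign_eq_neg_one {w t : W} (h : cs.reflSign w t = -1) :
    ℓ (w * t) < ℓ w := by
  obtain ⟨ω, hω, rfl⟩ := cs.exists_isReduced w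
  rw [reflSign_wordProd] at h
  have ht : t ∈ ris ω := by
    by_contra hn
    simp [count_eq_zero_of_not_mem hn] at h
  exact hω ▸ cs.length_wordProd_mul_lt_of_mem_rightInvSeq ht

theorem reflSign_eq_neg_one_of_length_mul_lt {w t : W} (ht : cs.IsReflection t)
    (h : ℓ (w * t) < ℓ w) : cs.reflSign w t = -1 := by
  refine (Int.units_eq_one_or _).resolve_left fun hone => ?_
  have hflip : cs.reflSign (w * t) t = -1 := by
    rw [reflSign_mul, reflSign_self cs ht, MulAut.conj_apply, ht.mul_self, one_mul, ht.inv, hone,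
      mul_one]
  have := cs.length_mul_lt_of_reflSign_eq_neg_one hflip
  rw [mul_assoc, ht.mul_self, mul_one] at this
  omega

theorem mem_rightInvSeq_of_length_mul_lt (ω : List B) {t : W} (ht : cs.IsReflection t)
    (h : ℓ (π ω * t) < ℓ (π ω)) : t ∈ ris ω := by
  have hsign := cs.reflSign_eq_neg_one_of_length_mul_lt ht h
  rw [reflSign_wordProd] at hsign
  by_contra hn
  simp [count_eq_zero_of_not_mem hn] at hsign

theorem mem_leftInvSeq_of_length_mul_lt (ω : List B) {t : W} (ht : cs.IsReflection t)
    (h : ℓ (t * π ω) < ℓ (π ω)) : t ∈ lis ω := by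
  rw [← mem_reverse, ← rightInvSeq_reverse]
  refine cs.mem_rightInvSeq_of_length_mul_lt _ ht ?_
  rwa [wordProd_reverse, ← cs.length_inv, mul_inv_rev, inv_inv, ht.inv, cs.length_inv]

theorem leftInvSeq_append (α β : List B) :
    lis (α ++ β) = lis α ++ (lis β).map (MulAut.conj (π α)) := by
  induction α with
  | nil => simp
  | cons i α ih =>
    change s i :: (lis (α ++ β)).map (MulAut.conj (s i)) =
      (s i :: (lis α).map (MulAut.conj (s i))) ++ _
    rw [ih, map_append, map_map, wordProd_cons, map_mul, cons_append]
    rfl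

theorem length_mul_add_length_eq_of_simple_mul {u y : W} {j : B}
    (hy : ℓ (s j * y) = ℓ y + 1) (hu : ℓ (u * s j) = ℓ u + 1)
    (h : ℓ (u * (s j * y)) + ℓ u = ℓ (s j * y)) : ℓ (u * y) + ℓ u = ℓ y := by
  -- `s j` is a left descent of `s j * y = u⁻¹ * (u * (s j * y))`, so strong exchange puts it in
  -- the left inversion sequence of `ρ ++ ν`; `hu` excludes the `ρ` part, and an occurrence in
  -- the `ν` part means `u * s j * u⁻¹` is a left inversion of `u * (s j * y)`.
  obtain ⟨ρ, hρ, hρu⟩ := cs.exists_isReduced u⁻¹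
  obtain ⟨ν, hν, hνz⟩ := cs.exists_isReduced (u * (s j * y))
  have hprod : π (ρ ++ ν) = s j * y := by
    rw [wordProd_append, ← hρu, ← hνz, inv_mul_cancel_left]
  have hdesc : ℓ (s j * π (ρ ++ ν)) < ℓ (π (ρ ++ ν)) := by
    rw [hprod, simple_mul_simple_cancel_left]
    omega
  have hmem := cs.mem_leftInvSeq_of_length_mul_lt _ (cs.isReflection_simple j) hdesc
  rw [leftInvSeq_append, mem_append, mem_map] at hmem
  rcases hmem with hρmem | ⟨t, htν, hconj⟩
  · have hinv := (cs.isLeftInversion_of_mem_leftInvSeq hρ hρmem).2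
    rw [← hρu, ← cs.length_inv, mul_inv_rev, inv_inv, inv_simple, cs.length_inv] at hinv
    omega
  · have ht : t = u * s j * u⁻¹ := by
      rw [← hρu, MulAut.conj_apply, inv_inv] at hconj
      rw [← hconj]
      group
    have hinv := (cs.isLeftInversion_of_mem_leftInvSeq hν htν).2
    rw [← hνz, ht, show u * s j * u⁻¹ * (u * (s j * y)) = u * (s j * (s j * y)) by group,
      simple_mul_simple_cancel_left] at hinv
    have := cs.length_le_length_mul_add_left u y
    omega

theorem length_mul_add_length_eq_or_of_simple_mul {u y : W} {j : B}
    (h : ℓ (u * (s j * y)) + ℓ u = ℓ (s j * y)) :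
    (ℓ (u * y) + ℓ u = ℓ y ∧ ℓ (u * y) < ℓ (u * (s j * y))) ∨
      ℓ (u * s j * y) + ℓ (u * s j) = ℓ y := by
  have hlow := cs.length_le_length_mul_add_left (u * s j) y
  rw [mul_assoc] at hlow ⊢
  rcases cs.length_simple_mul y j with hy | hy <;>
    rcases cs.length_mul_simple u j with hu | hu
  · have := cs.length_mul_add_length_eq_of_simple_mul hy hu h
    left
    omega
  all_goals omega

theorem exists_sublist_length_mul_add_length_eq (τ : List B) (y : W) :
    ∃ σ, σ <+ τ ∧ ℓ (π σ * y) + ℓ (π σ) = ℓ y ∧ ℓ (π σ * y) ≤ ℓ (π τ * y) := by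
  induction τ using List.reverseRecOn generalizing y with
  | nil => exact ⟨[], Sublist.refl _, by simp, le_rfl⟩
  | append_singleton τ j ih =>
    obtain ⟨σ, hστ, hσ, hle⟩ := ih (s j * y)
    have hword : ∀ ω : List B, π (ω ++ [j]) = π ω * s j := by simp [wordProd_append]
    rw [hword, mul_assoc]
    rcases cs.length_mul_add_length_eq_or_of_simple_mul hσ with ⟨hσ', hlt⟩ | hσ'
    · exact ⟨σ, hστ.trans (sublist_append_left _ _), hσ', by omega⟩
    · exact ⟨σ ++ [j], hστ.append_right _, by rwa [hword], by rwa [hword, mul_assoc]⟩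

theorem eq_of_bruhatLE_of_length_le {z' z : W} (h : cs.bruhatLE z' z) (hlen : ℓ z ≤ ℓ z') :
    z' = z := by
  obtain ⟨ω, ω', hω, rfl, hsub, rfl⟩ := h
  have hω' := cs.length_wordProd_le ω'
  have hsub_len := hsub.length_le
  rw [hsub.eq_of_length (by rw [hω.eq] at hlen; omega)]

section BruhatMin

variable {cs}

theorem IsUniqueBruhatMin.length_le {S : Set W} {m : W} (h : cs.IsUniqueBruhatMin S m) {z : W}
    (hz : z ∈ S) : ℓ m ≤ ℓ z := by
  set z₀ := Function.argminOn cs.length S ⟨z, hz⟩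
  have hmin : ∀ z' ∈ S, ℓ z₀ ≤ ℓ z' := fun z' hz' => Function.argminOn_le cs.length S hz'
  have hz₀ : z₀ = m := h.2 z₀ (Function.argminOn_mem ..) fun z' hz' hle =>
    cs.eq_of_bruhatLE_of_length_le hle (hmin z' hz')
  exact hz₀ ▸ hmin z hz

theorem IsUniqueBruhatMin.eq_of_length_le {S : Set W} {m z : W} (h : cs.IsUniqueBruhatMin S m)
    (hz : z ∈ S) (hlen : ℓ z ≤ ℓ m) : z = m :=
  h.2 z hz fun _ hz' hle => cs.eq_of_bruhatLE_of_length_le hle (hlen.trans (h.length_le hz'))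

end BruhatMin

end CoxeterSystem

/-- If `x ▷ y` is the unique minimal element of `{u * y : u ≤ x}`, then there exists
`u' ≤ x` with `x ▷ y = u' * y` and `ℓ(x ▷ y) = ℓ(y) - ℓ(u')`. -/
theorem tri_exists_length_subtractive {B W : Type*} [Group W] {M : CoxeterMatrix B} (cs : CoxeterSystem M W)
    (tri : W → W → W)
    (htri : ∀ x y : W, cs.IsUniqueBruhatMin (cs.triSet x y) (tri x y))
    (x y : W) :
    ∃ u' : W, cs.bruhatLE u' x ∧ tri x y = u' * y ∧
      cs.length (tri x y) = cs.length y - cs.length u' := by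
  obtain ⟨⟨⟨_, ⟨ω, τ, hω, hωx, hτω, rfl⟩, htri_eq⟩, -⟩, -⟩ := htri x y
  obtain ⟨σ, hστ, hσ, hle⟩ := cs.exists_sublist_length_mul_add_length_eq τ y
  have hσx : cs.bruhatLE (cs.wordProd σ) x := ⟨ω, σ, hω, hωx, hστ.trans hτω, rfl⟩
  have heq : cs.wordProd σ * y = tri x y :=
    (htri x y).eq_of_length_le ⟨_, hσx, rfl⟩ (htri_eq ▸ hle)
  exact ⟨cs.wordProd σ, hσx, heq.symm, by rw [← heq]; omega⟩
end

section
/- If s is a simple reflection and a, b elements of a Coxeter group W with sa > a, then (sa) ∗ b = max{a ∗ b, s(a ∗ b)} in the Bruhat order. -/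
/-!
Associativity together with `s ∗ a = s a` (as `s a > a`) gives `(s a) ∗ b = s ∗ (a ∗ b)`, and
`s ∗ u` is by definition the longer of `u` and `s u`, which is the Bruhat-larger of the two.
-/

namespace CoxeterSystem

variable {B W : Type*} [Group W] {M : CoxeterMatrix B} (cs : CoxeterSystem M W)

theorem bruhatLE_refl (x : W) : cs.bruhatLE x x := by
  obtain ⟨ω, hω, rfl⟩ := cs.exists_isReduced x
  exact ⟨ω, ω, hω, rfl, List.Sublist.refl ω, rfl⟩

theorem bruhatLE_simple_mul_of_length_lt {i : B} {w : W}
    (h : cs.length w < cs.length (cs.simple i * w)) :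
    cs.bruhatLE w (cs.simple i * w) := by
  obtain ⟨ω, hω, rfl⟩ := cs.exists_isReduced w
  have hlen : cs.length (cs.simple i * cs.wordProd ω) = cs.length (cs.wordProd ω) + 1 :=
    (cs.length_simple_mul (cs.wordProd ω) i).resolve_right (by omega)
  refine ⟨i :: ω, ω, ?_, cs.wordProd_cons i ω, List.sublist_cons_self i ω, rfl⟩
  rw [IsReduced, wordProd_cons, hlen, List.length_cons, hω]

theorem bruhatLE_of_length_simple_mul_lt {i : B} {w : W}
    (h : cs.length (cs.simple i * w) < cs.length w) :
    cs.bruhatLE (cs.simple i * w) w := by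
  have h' : cs.length (cs.simple i * w) < cs.length (cs.simple i * (cs.simple i * w)) := by
    rwa [simple_mul_simple_cancel_left]
  simpa only [simple_mul_simple_cancel_left] using cs.bruhatLE_simple_mul_of_length_lt h'

theorem demazure_simple_isBruhatMax (star : W → W → W) {i : B}
    (hstar : ∀ w : W, star (cs.simple i) w =
      if cs.length w < cs.length (cs.simple i * w) then cs.simple i * w else w) (u : W) :
    (star (cs.simple i) u = u ∨ star (cs.simple i) u = cs.simple i * u) ∧
    cs.bruhatLE u (star (cs.simple i) u) ∧
    cs.bruhatLE (cs.simple i * u) (star (cs.simple i) u) := by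
  rw [hstar]
  by_cases h : cs.length u < cs.length (cs.simple i * u)
  · rw [if_pos h]
    exact ⟨Or.inr rfl, cs.bruhatLE_simple_mul_of_length_lt h, cs.bruhatLE_refl _⟩
  · rw [if_neg h]
    have h' : cs.length (cs.simple i * u) < cs.length u := by
      have := cs.length_simple_mul u i
      omega
    exact ⟨Or.inl rfl, cs.bruhatLE_refl u, cs.bruhatLE_of_length_simple_mul_lt h'⟩

end CoxeterSystem

theorem demazure_simple_mul_general {B W : Type*} [Group W] {M : CoxeterMatrix B} (cs : CoxeterSystem M W)
    (star : W → W → W)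
    (hstar_simple : ∀ (i : B) (w : W), star (cs.simple i) w =
      if cs.length w < cs.length (cs.simple i * w) then cs.simple i * w else w)
    (hstar_assoc : ∀ a b c : W, star (star a b) c = star a (star b c))
    (i : B) (a b : W) (ha : cs.length a < cs.length (cs.simple i * a)) :
    (star (cs.simple i * a) b = star a b ∨
      star (cs.simple i * a) b = cs.simple i * star a b) ∧
    cs.bruhatLE (star a b) (star (cs.simple i * a) b) ∧
    cs.bruhatLE (cs.simple i * star a b) (star (cs.simple i * a) b) := by
  have hsa : star (cs.simple i) a = cs.simple i * a := by
    rw [hstar_simple, if_pos ha]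
  rw [← hsa, hstar_assoc]
  exact cs.demazure_simple_isBruhatMax star (hstar_simple i) (star a b)

/-- If `s a > a` then `(s a) ∗ b = max {a ∗ b, s (a ∗ b)}` in the Bruhat order. -/
theorem demazure_simple_mul {B W : Type*} [Group W] {M : CoxeterMatrix B} (cs : CoxeterSystem M W)
    (star : W → W → W)
    (hstar_one : ∀ w : W, star 1 w = w)
    (hstar_simple : ∀ (i : B) (w : W), star (cs.simple i) w =
      if cs.length w < cs.length (cs.simple i * w) then cs.simple i * w else w)
    (hstar_assoc : ∀ a b c : W, star (star a b) c = star a (star b c))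
    (i : B) (a b : W) (ha : cs.length a < cs.length (cs.simple i * a)) :
    (star (cs.simple i * a) b = star a b ∨
      star (cs.simple i * a) b = cs.simple i * star a b) ∧
    cs.bruhatLE (star a b) (star (cs.simple i * a) b) ∧
    cs.bruhatLE (cs.simple i * star a b) (star (cs.simple i * a) b) :=
  demazure_simple_mul_general cs star hstar_simple hstar_assoc i a b ha
end
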